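/- arXiv:2502.08077 — 2 statements merged into one kernel-verified Lean document; each statement's English description precedes it below -/
import Mathlib

section
/- Let c_1,...,c_T ∈ {0,1} with ∑_t c_t ≤ C for some C ≥ 1. Let G_t be independent random variables with G_t = c_t with probability 1/C and G_t = 0 otherwise. Then with probability at least 1−δ, ∑_{t=1}^T G_t ≤ log(1/δ) + 3. -/
open MeasureTheory ProbabilityTheory Finset
open scoped ENNReal Nat

/-! Only the `n ≤ C` rounds with `c t = 1` contribute, and the sum counts those of them that are
sampled. If it exceeds `log (1/δ) + 3`, then some `k = ⌊log (1/δ)⌋₊ + 3` of them are all sampled;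
by independence and a union bound over `k`-subsets this has probability at most
`(n choose k) C⁻ᵏ ≤ (n/C)ᵏ / k! ≤ 1/k!`, and `k! ≥ 3^(k-2) ≥ exp (k - 2) > 1/δ`. -/

theorem Finset.sum_eq_card_filter_eq_one {ι R : Type*} [AddCommMonoidWithOne R] [DecidableEq R]
    (s : Finset ι) {f : ι → R} (hf : ∀ i ∈ s, f i = 0 ∨ f i = 1) :
    ∑ i ∈ s, f i = #{i ∈ s | f i = 1} := by
  rw [← sum_boole]
  refine sum_congr rfl fun i hi => ?_
  split_ifs with h1
  exacts [h1, (hf i hi).resolve_right h1]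

theorem Finset.sum_mul_eq_sum_filter_eq_one {ι R : Type*} [NonAssocSemiring R] [DecidableEq R]
    (s : Finset ι) {f : ι → R} (hf : ∀ i ∈ s, f i = 0 ∨ f i = 1) (g : ι → R) :
    ∑ i ∈ s, f i * g i = ∑ i ∈ s with f i = 1, g i := by
  rw [sum_filter]
  refine sum_congr rfl fun i hi => ?_
  split_ifs with h1
  · rw [h1, one_mul]
  · rw [(hf i hi).resolve_right h1, zero_mul]

theorem Nat.choose_mul_pow_le_one_div_factorial {α : Type*} [Field α] [LinearOrder α]
    [IsStrictOrderedRing α] {n k : ℕ} {p : α} (hp : 0 ≤ p) (hnp : n * p ≤ 1) :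
    (n.choose k : α) * p ^ k ≤ 1 / k ! :=
  calc (n.choose k : α) * p ^ k ≤ n ^ k / k ! * p ^ k := by
        gcongr; exact Nat.choose_le_pow_div k n
    _ = (n * p) ^ k / k ! := by ring
    _ ≤ 1 / k ! := by gcongr; exact pow_le_one₀ (by positivity) hnp

theorem ProbabilityTheory.iIndepFun.measure_le_card_filter_le_choose_mul_pow
    {Ω ι : Type*} {β : ι → Type*} {mΩ : MeasurableSpace Ω} [∀ i, MeasurableSpace (β i)]
    {μ : Measure Ω} {X : ∀ i, Ω → β i} (hX : iIndepFun X μ) {S : ∀ i, Set (β i)}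
    [∀ i, DecidablePred (· ∈ S i)] (hS : ∀ i, MeasurableSet (S i)) {p : ℝ≥0∞}
    (hp : ∀ i, μ (X i ⁻¹' S i) ≤ p) (A : Finset ι) (k : ℕ) :
    μ {ω | k ≤ #{i ∈ A | X i ω ∈ S i}} ≤ (#A).choose k * p ^ k := by
  have hcover : {ω | k ≤ #{i ∈ A | X i ω ∈ S i}} ⊆
      ⋃ s ∈ A.powersetCard k, ⋂ i ∈ s, X i ⁻¹' S i := by
    intro ω hω
    obtain ⟨s, hs, hcard⟩ := exists_subset_card_eq hω
    refine Set.mem_biUnion (mem_powersetCard.2 ⟨hs.trans (filter_subset _ _), hcard⟩) ?_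
    exact Set.mem_iInter₂.2 fun i hi => (mem_filter.1 (hs hi)).2
  calc μ {ω | k ≤ #{i ∈ A | X i ω ∈ S i}}
      ≤ ∑ s ∈ A.powersetCard k, μ (⋂ i ∈ s, X i ⁻¹' S i) :=
        (measure_mono hcover).trans (measure_biUnion_finset_le _ _)
    _ ≤ ∑ s ∈ A.powersetCard k, p ^ k := by
        gcongr with s hs
        rw [hX.measure_inter_preimage_eq_mul s fun i _ => hS i, ← (mem_powersetCard.1 hs).2]
        exact prod_le_pow_card _ _ _ fun i _ => hp i
    _ = (#A).choose k * p ^ k := by rw [sum_const, card_powersetCard, nsmul_eq_mul]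

theorem ProbabilityTheory.iIndepFun.measure_le_card_filter_le_one_div_factorial
    {Ω ι : Type*} {β : ι → Type*} {mΩ : MeasurableSpace Ω} [∀ i, MeasurableSpace (β i)]
    {μ : Measure Ω} {X : ∀ i, Ω → β i} (hX : iIndepFun X μ) {S : ∀ i, Set (β i)}
    [∀ i, DecidablePred (· ∈ S i)] (hS : ∀ i, MeasurableSet (S i)) {p : ℝ} (hp0 : 0 ≤ p)
    (hp : ∀ i, μ (X i ⁻¹' S i) ≤ ENNReal.ofReal p) {A : Finset ι} (hAp : #A * p ≤ 1) (k : ℕ) :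
    μ {ω | k ≤ #{i ∈ A | X i ω ∈ S i}} ≤ ENNReal.ofReal (1 / k !) :=
  calc μ {ω | k ≤ #{i ∈ A | X i ω ∈ S i}} ≤ (#A).choose k * ENNReal.ofReal p ^ k :=
        hX.measure_le_card_filter_le_choose_mul_pow hS hp A k
    _ = ENNReal.ofReal ((#A).choose k * p ^ k) := by
        rw [ENNReal.ofReal_mul (by positivity), ENNReal.ofReal_natCast, ENNReal.ofReal_pow hp0]
    _ ≤ ENNReal.ofReal (1 / k !) :=
        ENNReal.ofReal_le_ofReal (Nat.choose_mul_pow_le_one_div_factorial hp0 hAp)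

theorem Real.exp_le_factorial_add_two (m : ℕ) : exp m ≤ (m + 2)! :=
  calc exp m = exp 1 ^ m := by rw [← exp_nat_mul, mul_one]
    _ ≤ 3 ^ m := by gcongr; exact exp_one_lt_three.le
    _ ≤ (2 ! * (2 + 1) ^ m : ℕ) := by push_cast; norm_num
    _ ≤ (m + 2)! := by rw [add_comm m]; exact_mod_cast Nat.factorial_mul_pow_le_factorial

theorem Real.one_div_factorial_floor_log_add_three_le {δ : ℝ} (hδ : 0 < δ) :
    1 / ((⌊log (1 / δ)⌋₊ + 3)! : ℝ) ≤ δ := by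
  have hlt : 1 / δ < (⌊log (1 / δ)⌋₊ + 3)! :=
    calc 1 / δ = exp (log (1 / δ)) := (exp_log (by positivity)).symm
      _ < exp ↑(⌊log (1 / δ)⌋₊ + 1) := by
          rw [exp_lt_exp]; exact_mod_cast Nat.lt_floor_add_one _
      _ ≤ _ := exp_le_factorial_add_two _
  rw [div_le_iff₀ (by positivity)]
  rw [div_lt_iff₀ hδ] at hlt
  linarith

theorem MeasureTheory.ofReal_one_sub_le_prob_of_prob_compl_le {Ω : Type*}
    {m0 : MeasurableSpace Ω} {μ : Measure Ω} [IsProbabilityMeasure μ] {s : Set Ω} {δ : ℝ}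
    (hδ : 0 ≤ δ) (hs : μ sᶜ ≤ ENNReal.ofReal δ) : ENNReal.ofReal (1 - δ) ≤ μ s := by
  rw [ENNReal.ofReal_sub _ hδ, ENNReal.ofReal_one, tsub_le_iff_left, ← measure_univ (μ := μ),
    ← Set.compl_union_self s]
  exact (measure_union_le sᶜ s).trans (by gcongr)

theorem stmt1_general {Ω : Type*} {m0 : MeasurableSpace Ω} (μ : Measure Ω) [IsProbabilityMeasure μ]
    (T : ℕ) (C : ℝ)
    (c : Fin T → ℝ) (hc01 : ∀ t, c t = 0 ∨ c t = 1)
    (hcsum : ∑ t, c t ≤ C)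
    (B : Fin T → Ω → ℝ)
    (hindep : iIndepFun (m := fun _ => (inferInstance : MeasurableSpace ℝ)) B μ)
    (hB01 : ∀ t, ∀ ω, B t ω = 0 ∨ B t ω = 1)
    (hBmean : ∀ t, μ {ω | B t ω = 1} = ENNReal.ofReal (1 / C))
    (δ : ℝ) (hδ : δ ∈ Set.Ioo (0 : ℝ) 1) :
    ENNReal.ofReal (1 - δ) ≤
      μ {ω | ∑ t, c t * B t ω ≤ Real.log (1 / δ) + 3} := by
  classical
  obtain ⟨hδ0, hδ1⟩ := hδ
  set k := ⌊Real.log (1 / δ)⌋₊ + 3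
  set A : Finset (Fin T) := {t | c t = 1}
  have hAC : (#A : ℝ) ≤ C := by
    rw [← sum_eq_card_filter_eq_one _ fun t _ => hc01 t]; exact hcsum
  have hC0 : 0 ≤ C := (Nat.cast_nonneg _).trans hAC
  have hsum (ω : Ω) : ∑ t, c t * B t ω = #{t ∈ A | B t ω ∈ ({1} : Set ℝ)} := by
    rw [sum_mul_eq_sum_filter_eq_one _ (fun t _ => hc01 t),
      sum_eq_card_filter_eq_one _ fun t _ => hB01 t ω]
    rfl
  have hk : (k : ℝ) ≤ Real.log (1 / δ) + 3 := by
    push_cast [k]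
    linarith [Nat.floor_le (Real.log_nonneg (one_le_one_div hδ0 hδ1.le))]
  have hbad : {ω | ∑ t, c t * B t ω ≤ Real.log (1 / δ) + 3}ᶜ ⊆
      {ω | k ≤ #{t ∈ A | B t ω ∈ ({1} : Set ℝ)}} := by
    intro ω hω
    simp only [Set.mem_compl_iff, Set.mem_ofPred_eq, not_le, hsum] at hω ⊢
    exact_mod_cast hk.trans hω.le
  refine ofReal_one_sub_le_prob_of_prob_compl_le hδ0.le ?_
  calc μ {ω | ∑ t, c t * B t ω ≤ Real.log (1 / δ) + 3}ᶜ
      ≤ μ {ω | k ≤ #{t ∈ A | B t ω ∈ ({1} : Set ℝ)}} := measure_mono hbad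
    _ ≤ ENNReal.ofReal (1 / k !) :=
        hindep.measure_le_card_filter_le_one_div_factorial (fun _ => measurableSet_singleton 1)
          (by positivity) (fun t => (hBmean t).le)
          (by rw [mul_one_div]; exact div_le_one_of_le₀ hAC hC0) k
    _ ≤ ENNReal.ofReal δ :=
        ENNReal.ofReal_le_ofReal (Real.one_div_factorial_floor_log_add_three_le hδ0)

/-- Corruption observed by the slow instance of CascadeRKC: with `c t ∈ {0,1}`,
`∑ c t ≤ C`, and `G t = c t · B t` where the `B t` are independent Bernoulli(1/C)
sampling indicators, with probability at least `1 - δ` the total observed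
corruption satisfies `∑ G t ≤ log(1/δ) + 3`. -/
theorem stmt1 {Ω : Type*} {m0 : MeasurableSpace Ω} (μ : Measure Ω) [IsProbabilityMeasure μ]
    (T : ℕ) (C : ℝ) (hC : 1 ≤ C)
    (c : Fin T → ℝ) (hc01 : ∀ t, c t = 0 ∨ c t = 1)
    (hcsum : ∑ t, c t ≤ C)
    (B : Fin T → Ω → ℝ)
    (hmeas : ∀ t, Measurable (B t))
    (hindep : iIndepFun (m := fun _ => (inferInstance : MeasurableSpace ℝ)) B μ)
    (hB01 : ∀ t, ∀ ω, B t ω = 0 ∨ B t ω = 1)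
    (hBmean : ∀ t, μ {ω | B t ω = 1} = ENNReal.ofReal (1 / C))
    (δ : ℝ) (hδ : δ ∈ Set.Ioo (0 : ℝ) 1) :
    ENNReal.ofReal (1 - δ) ≤
      μ {ω | ∑ t, c t * B t ω ≤ Real.log (1 / δ) + 3} :=
  stmt1_general (m0 := m0) μ T C c hc01 hcsum B hindep hB01 hBmean δ hδ
end

section
/- For any sequence of lists A_t ∈ Π_K(E) and any attraction weight vector w ∈ [0,1]^L with top-K set A*, the per-round expected regret f(A*, w) − f(A_t, w) is at most ∑_{k=1}^K Δ_{σ_t(k), k} where σ_t(k) is the item in A_t placed in decreasing-w order at position k and Δ_{e,k} = w(k) − w(e) ≥ 0; moreover f(A*, w) − f(A_t, w) = 0 if A_t contains the same set of items as A* (in any order). -/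
/-!
After sorting the played list by `σ`, its `k`-th item is no better than the `k`-th best item:
the first `k + 1` sorted items are distinct, so one of them has index at least `k`. Both rewards
are `1 - ∏ (1 - w)`, and for pointwise ordered factors in `[0, 1]` the difference of products
telescopes to at most the sum of the factor gaps. The reward only depends on the set of items.
-/

open Finset

theorem Finset.prod_sub_prod_le_sum_sub {ι R : Type*} [CommRing R] [LinearOrder R]
    [IsStrictOrderedRing R] (s : Finset ι) {u v : ι → R}
    (hv : ∀ i ∈ s, 0 ≤ v i) (hvu : ∀ i ∈ s, v i ≤ u i) (hu : ∀ i ∈ s, u i ≤ 1) :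
    ∏ i ∈ s, u i - ∏ i ∈ s, v i ≤ ∑ i ∈ s, (u i - v i) := by
  classical
  induction s using Finset.induction_on with
  | empty => simp
  | insert a s has ih =>
    simp only [mem_insert, forall_eq_or_imp] at hv hvu hu
    have hV₀ : 0 ≤ ∏ i ∈ s, v i := prod_nonneg hv.2
    have hV₁ : ∏ i ∈ s, v i ≤ 1 := prod_le_one hv.2 fun i hi => (hvu.2 i hi).trans (hu.2 i hi)
    have hVU : ∏ i ∈ s, v i ≤ ∏ i ∈ s, u i := prod_le_prod hv.2 hvu.2
    rw [prod_insert has, prod_insert has, sum_insert has]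
    calc u a * ∏ i ∈ s, u i - v a * ∏ i ∈ s, v i
        = u a * (∏ i ∈ s, u i - ∏ i ∈ s, v i) + (u a - v a) * ∏ i ∈ s, v i := by ring
      _ ≤ 1 * (∏ i ∈ s, u i - ∏ i ∈ s, v i) + (u a - v a) * 1 := by
        have hgap_s := sub_nonneg.2 hVU
        have hgap_a := sub_nonneg.2 hvu.1
        gcongr
        exact hu.1
      _ ≤ u a - v a + ∑ i ∈ s, (u i - v i) := by linarith [ih hv.2 hvu.2 hu.2]

theorem Fin.exists_le_and_le_apply_of_injective {K L : ℕ} {b : Fin K → Fin L}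
    (hb : Function.Injective b) (k : Fin K) : ∃ j ≤ k, (k : ℕ) ≤ b j := by
  by_contra! h
  have hmaps : Set.MapsTo (fun j => (b j : ℕ)) (Iic k) (range k) := fun j hj =>
    mem_range.2 (h j (mem_Iic.1 hj))
  have hcard := card_le_card_of_injOn _ hmaps (Fin.val_injective.comp hb).injOn
  simp at hcard

theorem Antitone.apply_le_apply_castLE {K L : ℕ} {β : Type*} [Preorder β] (hKL : K ≤ L)
    {w : Fin L → β} (hw : Antitone w) {b : Fin K → Fin L} (hb : Function.Injective b)
    (hwb : Antitone (w ∘ b)) (k : Fin K) : w (b k) ≤ w (Fin.castLE hKL k) := by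
  obtain ⟨j, hjk, hkj⟩ := Fin.exists_le_and_le_apply_of_injective hb k
  exact (hwb hjk).trans (hw (Fin.le_def.2 hkj))

theorem Finset.prod_comp_eq_of_image_univ_eq {ι α M : Type*} [Fintype ι] [DecidableEq α]
    [CommMonoid M] {a b : ι → α} (ha : Function.Injective a) (hb : Function.Injective b)
    (hab : univ.image a = univ.image b) (f : α → M) : ∏ i, f (a i) = ∏ i, f (b i) := by
  rw [← prod_image ha.injOn, hab, prod_image hb.injOn]

/-- Position-wise gap decomposition of the per-round regret in the cascade
model. Items `0,...,L-1` have `w 0 ≥ ⋯ ≥ w (L-1)` in `[0,1]`; the optimal list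
is `A* = (0,...,K-1)`; `a` is any played list of `K` distinct items and `σ` a
permutation placing it in decreasing-`w` order. Then the per-round expected
regret `f(A*,w) - f(A,w)` is at most `∑ₖ Δ_{σ(k),k}` with each
`Δ_{σ(k),k} = w(k) - w(a(σ(k))) ≥ 0`; moreover the regret is `0` whenever `a`
contains the same set of items as `A*` (in any order). -/
theorem stmt17 (K L : ℕ) (hKL : K ≤ L)
    (w : Fin L → ℝ) (hw : ∀ i, w i ∈ Set.Icc (0 : ℝ) 1)
    (hsorted : ∀ i j : Fin L, i ≤ j → w j ≤ w i)
    (a : Fin K → Fin L) (ha : Function.Injective a)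
    (σ : Equiv.Perm (Fin K))
    (hσ : ∀ k j : Fin K, k ≤ j → w (a (σ j)) ≤ w (a (σ k))) :
    ((1 - ∏ k, (1 - w (Fin.castLE hKL k))) - (1 - ∏ k, (1 - w (a k)))
        ≤ ∑ k, (w (Fin.castLE hKL k) - w (a (σ k)))) ∧
      (∀ k, 0 ≤ w (Fin.castLE hKL k) - w (a (σ k))) ∧
      (Finset.image a Finset.univ = Finset.image (Fin.castLE hKL) Finset.univ →
        (1 - ∏ k, (1 - w (Fin.castLE hKL k))) - (1 - ∏ k, (1 - w (a k))) = 0) := by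
  have hgap (k : Fin K) : w (a (σ k)) ≤ w (Fin.castLE hKL k) :=
    Antitone.apply_le_apply_castLE hKL hsorted (ha.comp σ.injective) hσ k
  refine ⟨?_, fun k => sub_nonneg.2 (hgap k), fun himage => ?_⟩
  · have hprod := prod_sub_prod_le_sum_sub univ (u := fun k => 1 - w (a (σ k)))
      (v := fun k => 1 - w (Fin.castLE hKL k)) (fun k _ => sub_nonneg.2 (hw _).2)
      (fun k _ => sub_le_sub_left (hgap k) 1) (fun k _ => sub_le_self 1 (hw _).1)
    rw [← Equiv.prod_comp σ (fun k => 1 - w (a k))]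
    simpa using hprod
  · rw [prod_comp_eq_of_image_univ_eq ha (Fin.castLE_injective hKL) himage (fun x => 1 - w x),
      sub_self]
end
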